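/- arXiv:2512.16001 — 3 statements merged into one kernel-verified Lean document; each statement's English description precedes it below -/
import Mathlib

section
/- Let α, β, h, ε_x, ε_y be independent Bernoulli random variables with parameters p_α, p_β, p, p_x, p_y. Define c⁺ = max(α·h, ε_x)·max(β·h, ε_y). Then c⁺ is Bernoulli with parameter p⁺ = p·p_α·p_β + p_x·p_y + p·p_α·(1-p_β)·(1-p_x)·p_y + p·(1-p_α)·p_β·p_x·(1-p_y) − p·p_α·p_β·p_x·p_y. -/
/- The event `c⁺ = 1` splits as `{αβh = 1} ∪ {ε_x ε_y = 1}` together with two further disjoint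
atoms `{αh = 1, β = 0, ε_x = 0, ε_y = 1}` and `{βh = 1, α = 0, ε_x = 1, ε_y = 0}`. Each of these
events fixes some of the five variables, so by independence its probability is a product of
`p_•` and `1 - p_•`; inclusion–exclusion on the first two gives the term `- p pα pβ px py`. -/

open MeasureTheory ProbabilityTheory

/-- `X` is a Bernoulli random variable with parameter `r`: it is measurable,
takes values in `{0,1}`, and `P(X = 1) = r`. -/
def IsBernoulli {Ω : Type*} [MeasurableSpace Ω] (μ : Measure Ω) (X : Ω → ℕ)
    (r : ℝ) : Prop :=
  Measurable X ∧ (∀ ω, X ω = 0 ∨ X ω = 1) ∧ (μ {ω | X ω = 1}).toReal = r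

namespace IsBernoulli

variable {Ω : Type*} [MeasurableSpace Ω] {μ : Measure Ω} {X : Ω → ℕ} {r : ℝ}

lemma measureReal_preimage_one (hX : IsBernoulli μ X r) : μ.real (X ⁻¹' {1}) = r := hX.2.2

lemma measureReal_preimage_zero [IsProbabilityMeasure μ] (hX : IsBernoulli μ X r) :
    μ.real (X ⁻¹' {0}) = 1 - r := by
  have hcompl : X ⁻¹' {0} = (X ⁻¹' {1})ᶜ := by
    ext ω
    rcases hX.2.1 ω with h | h <;> simp [h]
  rw [hcompl, probReal_compl_eq_one_sub (hX.1 (measurableSet_singleton 1)),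
    hX.measureReal_preimage_one]

end IsBernoulli

section JointPreimage

variable {Ω ι κ : Type*}

def jointPreimage (X : ι → Ω → κ) (s : ι → Set κ) : Set Ω := ⋂ i, X i ⁻¹' s i

@[simp]
lemma mem_jointPreimage {X : ι → Ω → κ} {s : ι → Set κ} {ω : Ω} :
    ω ∈ jointPreimage X s ↔ ∀ i, X i ω ∈ s i :=
  Set.mem_iInter

lemma disjoint_jointPreimage {X : ι → Ω → κ} {s t : ι → Set κ} (i : ι)
    (h : Disjoint (s i) (t i)) : Disjoint (jointPreimage X s) (jointPreimage X t) :=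
  (h.preimage (X i)).mono (Set.iInter_subset _ i) (Set.iInter_subset _ i)

variable [MeasurableSpace Ω] [MeasurableSpace κ]

lemma measurableSet_jointPreimage [Countable ι] {X : ι → Ω → κ} (hX : ∀ i, Measurable (X i))
    {s : ι → Set κ} (hs : ∀ i, MeasurableSet (s i)) : MeasurableSet (jointPreimage X s) :=
  MeasurableSet.iInter fun i => hX i (hs i)

lemma ProbabilityTheory.iIndepFun.measureReal_jointPreimage {μ : Measure Ω} [Fintype ι]
    {X : ι → Ω → κ} (hX : iIndepFun X μ) {s : ι → Set κ} (hs : ∀ i, MeasurableSet (s i)) :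
    μ.real (jointPreimage X s) = ∏ i, μ.real (X i ⁻¹' s i) := by
  simp only [jointPreimage, measureReal_def, hX.meas_iInter fun i => ⟨s i, hs i, rfl⟩,
    ENNReal.toReal_prod]

end JointPreimage

def cplus (a b c x y : ℕ) : ℕ := max (a * c) x * max (b * c) y

lemma cplus_eq_zero_or_eq_one {a b c x y : ℕ} (ha : a = 0 ∨ a = 1) (hb : b = 0 ∨ b = 1)
    (hc : c = 0 ∨ c = 1) (hx : x = 0 ∨ x = 1) (hy : y = 0 ∨ y = 1) :
    cplus a b c x y = 0 ∨ cplus a b c x y = 1 := by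
  rcases ha with rfl | rfl <;> rcases hb with rfl | rfl <;> rcases hc with rfl | rfl <;>
    rcases hx with rfl | rfl <;> rcases hy with rfl | rfl <;> decide

lemma cplus_eq_one_iff {a b c x y : ℕ} (ha : a = 0 ∨ a = 1) (hb : b = 0 ∨ b = 1)
    (hc : c = 0 ∨ c = 1) (hx : x = 0 ∨ x = 1) (hy : y = 0 ∨ y = 1) :
    cplus a b c x y = 1 ↔
      (a = 1 ∧ b = 1 ∧ c = 1) ∨ (x = 1 ∧ y = 1) ∨ (a = 1 ∧ b = 0 ∧ c = 1 ∧ x = 0 ∧ y = 1) ∨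
        (a = 0 ∧ b = 1 ∧ c = 1 ∧ x = 1 ∧ y = 0) := by
  rcases ha with rfl | rfl <;> rcases hb with rfl | rfl <;> rcases hc with rfl | rfl <;>
    rcases hx with rfl | rfl <;> rcases hy with rfl | rfl <;> decide

open Set in
lemma measureReal_cplus_eq_one {Ω : Type*} [MeasurableSpace Ω] (μ : Measure Ω)
    [IsFiniteMeasure μ] {X : Fin 5 → Ω → ℕ} (hX : ∀ i, Measurable (X i))
    (h01 : ∀ i ω, X i ω = 0 ∨ X i ω = 1) :
    μ.real {ω | cplus (X 0 ω) (X 1 ω) (X 2 ω) (X 3 ω) (X 4 ω) = 1} =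
      μ.real (jointPreimage X ![{1}, {1}, {1}, univ, univ])
        + μ.real (jointPreimage X ![univ, univ, univ, {1}, {1}])
        - μ.real (jointPreimage X ![{1}, {1}, {1}, {1}, {1}])
        + μ.real (jointPreimage X ![{1}, {0}, {1}, {0}, {1}])
        + μ.real (jointPreimage X ![{0}, {1}, {1}, {1}, {0}]) := by
  have hmeas : ∀ s, MeasurableSet (jointPreimage X s) :=
    fun s => measurableSet_jointPreimage hX fun _ => .of_discrete
  have hevent : {ω | cplus (X 0 ω) (X 1 ω) (X 2 ω) (X 3 ω) (X 4 ω) = 1} =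
      jointPreimage X ![{1}, {1}, {1}, univ, univ] ∪ jointPreimage X ![univ, univ, univ, {1}, {1}]
        ∪ jointPreimage X ![{1}, {0}, {1}, {0}, {1}]
        ∪ jointPreimage X ![{0}, {1}, {1}, {1}, {0}] := by
    ext ω
    rw [mem_ofPred_eq, cplus_eq_one_iff (h01 0 ω) (h01 1 ω) (h01 2 ω) (h01 3 ω) (h01 4 ω)]
    simp [Fin.forall_fin_succ, or_assoc]
  have hinter : jointPreimage X ![{1}, {1}, {1}, univ, univ]
      ∩ jointPreimage X ![univ, univ, univ, {1}, {1}]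
      = jointPreimage X ![{1}, {1}, {1}, {1}, {1}] := by
    ext ω
    simp [Fin.forall_fin_succ, and_assoc]
  rw [hevent, measureReal_union ?disj₄ (hmeas _), measureReal_union ?disj₃ (hmeas _),
    eq_sub_of_add_eq (measureReal_union_add_inter (hmeas _)), hinter]
  case disj₃ =>
    exact (disjoint_jointPreimage 1 (by simp)).union_left (disjoint_jointPreimage 3 (by simp))
  case disj₄ =>
    exact ((disjoint_jointPreimage 0 (by simp)).union_left
      (disjoint_jointPreimage 4 (by simp))).union_left (disjoint_jointPreimage 0 (by simp))

/-- The aligned product indicator `c⁺ = max(α·h, ε_x)·max(β·h, ε_y)` of five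
independent Bernoulli variables is Bernoulli with the stated parameter `p⁺`. -/
theorem cplus_bernoulli {Ω : Type*} [MeasurableSpace Ω] (μ : Measure Ω)
    [IsProbabilityMeasure μ] (α β h εx εy : Ω → ℕ) (pα pβ p px py : ℝ)
    (hα : IsBernoulli μ α pα) (hβ : IsBernoulli μ β pβ)
    (hh : IsBernoulli μ h p)
    (hεx : IsBernoulli μ εx px) (hεy : IsBernoulli μ εy py)
    (hind : iIndepFun ![α, β, h, εx, εy] μ) :
    IsBernoulli μ
      (fun ω => max (α ω * h ω) (εx ω) * max (β ω * h ω) (εy ω))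
      (p * pα * pβ + px * py + p * pα * (1 - pβ) * (1 - px) * py
        + p * (1 - pα) * pβ * px * (1 - py) - p * pα * pβ * px * py) := by
  have hX : ∀ i, Measurable (![α, β, h, εx, εy] i) := by
    intro i; fin_cases i
    exacts [hα.1, hβ.1, hh.1, hεx.1, hεy.1]
  have h01 : ∀ i ω, ![α, β, h, εx, εy] i ω = 0 ∨ ![α, β, h, εx, εy] i ω = 1 := by
    intro i; fin_cases i
    exacts [hα.2.1, hβ.2.1, hh.2.1, hεx.2.1, hεy.2.1]
  refine ⟨((hα.1.mul hh.1).max hεx.1).mul ((hβ.1.mul hh.1).max hεy.1),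
    fun ω => cplus_eq_zero_or_eq_one (hα.2.1 ω) (hβ.2.1 ω) (hh.2.1 ω) (hεx.2.1 ω) (hεy.2.1 ω), ?_⟩
  have key := measureReal_cplus_eq_one μ hX h01
  simp only [hind.measureReal_jointPreimage fun _ => .of_discrete, Fin.prod_univ_five,
    Matrix.cons_val, Set.preimage_univ, probReal_univ, mul_one, one_mul,
    hα.measureReal_preimage_one, hβ.measureReal_preimage_one, hh.measureReal_preimage_one,
    hεx.measureReal_preimage_one, hεy.measureReal_preimage_one, hα.measureReal_preimage_zero,
    hβ.measureReal_preimage_zero, hεx.measureReal_preimage_zero,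
    hεy.measureReal_preimage_zero] at key
  exact key.trans (by ring)
end

section
/- Let α, β, h, h', ε_x, ε_y be mutually independent Bernoulli random variables, where h and h' both have parameter p, α has parameter p_α, β has parameter p_β, ε_x has parameter p_x, ε_y has parameter p_y. Define c⁻ = max(α·h, ε_x)·max(β·h', ε_y). Then c⁻ is Bernoulli with parameter p⁻ = p²·p_α·p_β + p_x·p_y + p·p_α·(1-p_β)·(1-p_x)·p_y + p·(1-p_α)·p_β·p_x·(1-p_y) − p²·p_α·p_β·p_x·p_y + p·(1-p)·p_α·p_β·(p_y·(1-p_x) + p_x·(1-p_y)). -/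
/-!
On `{0,1}`-valued variables, `X * Y` is the indicator of `{X = 1} ∩ {Y = 1}` and `max X Y` that
of `{X = 1} ∪ {Y = 1}`, so for independent Bernoulli variables with parameters `p` and `q` they
are again Bernoulli, with parameters `p q` and `p + q - p q`. Now `c⁻` is built by these two
operations: `max (α h) εx` and `max (β h') εy` are Bernoulli with parameters `p pα + px - p pα px`
and `p pβ + py - p pβ py`, and they are independent because they are functions of the disjoint
triples `(α, h, εx)` and `(β, h', εy)`. The product of the two parameters is the stated `p⁻`.
-/

open MeasureTheory ProbabilityTheory

section IsBernoulli

variable {Ω : Type*} [MeasurableSpace Ω] {μ : Measure Ω} {X Y : Ω → ℕ} {p q : ℝ}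

lemma IsBernoulli.measure_inter_toReal (hX : IsBernoulli μ X p) (hY : IsBernoulli μ Y q)
    (hXY : IndepFun X Y μ) : (μ ({ω | X ω = 1} ∩ {ω | Y ω = 1})).toReal = p * q := by
  rw [← hX.2.2, ← hY.2.2, ← ENNReal.toReal_mul]
  exact congrArg ENNReal.toReal <| hXY.measure_inter_preimage_eq_mul {1} {1}
    (measurableSet_singleton 1) (measurableSet_singleton 1)

lemma IsBernoulli.mul (hX : IsBernoulli μ X p) (hY : IsBernoulli μ Y q) (hXY : IndepFun X Y μ) :
    IsBernoulli μ (fun ω => X ω * Y ω) (p * q) := by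
  refine ⟨hX.1.mul hY.1, fun ω => ?_, ?_⟩
  · rcases hX.2.1 ω with hx | hx <;> simp [hx, hY.2.1 ω]
  · have hset : {ω | X ω * Y ω = 1} = {ω | X ω = 1} ∩ {ω | Y ω = 1} :=
      Set.ext fun _ => mul_eq_one
    rw [hset, hX.measure_inter_toReal hY hXY]

lemma IsBernoulli.max [IsFiniteMeasure μ] (hX : IsBernoulli μ X p) (hY : IsBernoulli μ Y q)
    (hXY : IndepFun X Y μ) : IsBernoulli μ (fun ω => max (X ω) (Y ω)) (p + q - p * q) := by
  refine ⟨hX.1.max hY.1, fun ω => ?_, ?_⟩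
  · rcases hX.2.1 ω with hx | hx <;> rcases hY.2.1 ω with hy | hy <;> simp [hx, hy]
  · have hset : {ω | Max.max (X ω) (Y ω) = 1} = {ω | X ω = 1} ∪ {ω | Y ω = 1} := by
      ext ω
      rcases hX.2.1 ω with hx | hx <;> rcases hY.2.1 ω with hy | hy <;> simp [hx, hy]
    have hunion := measureReal_union_add_inter (μ := μ) (s := {ω | X ω = 1})
      (t := {ω | Y ω = 1}) (hY.1 (measurableSet_singleton 1))
    simp only [measureReal_def] at hunion
    rw [hset]
    linarith [hX.2.2, hY.2.2, hX.measure_inter_toReal hY hXY]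

end IsBernoulli

lemma ProbabilityTheory.iIndepFun.indepFun_comp_triple {Ω ι β γ δ : Type*} [MeasurableSpace Ω]
    [MeasurableSpace β] [MeasurableSpace γ] [MeasurableSpace δ] [DecidableEq ι]
    {μ : Measure Ω} {f : ι → Ω → β} (hf : iIndepFun f μ) (hmeas : ∀ i, Measurable (f i))
    {i₁ i₂ i₃ j₁ j₂ j₃ : ι} (hdisj : Disjoint ({i₁, i₂, i₃} : Finset ι) {j₁, j₂, j₃})
    {φ : β × β × β → γ} {ψ : β × β × β → δ} (hφ : Measurable φ) (hψ : Measurable ψ) :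
    IndepFun (fun ω => φ (f i₁ ω, f i₂ ω, f i₃ ω)) (fun ω => ψ (f j₁ ω, f j₂ ω, f j₃ ω)) μ :=
  (hf.indepFun_finset _ _ hdisj hmeas).comp
    (φ := fun v : ({i₁, i₂, i₃} : Finset ι) → β =>
      φ (v ⟨i₁, by simp⟩, v ⟨i₂, by simp⟩, v ⟨i₃, by simp⟩))
    (ψ := fun v : ({j₁, j₂, j₃} : Finset ι) → β =>
      ψ (v ⟨j₁, by simp⟩, v ⟨j₂, by simp⟩, v ⟨j₃, by simp⟩))
    (hφ.comp (by fun_prop)) (hψ.comp (by fun_prop))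

/-- The misaligned product indicator `c⁻ = max(α·h, ε_x)·max(β·h', ε_y)` of six
independent Bernoulli variables (with `h, h'` sharing parameter `p`) is
Bernoulli with the stated parameter `p⁻`. -/
theorem cminus_bernoulli {Ω : Type*} [MeasurableSpace Ω] (μ : Measure Ω)
    [IsProbabilityMeasure μ] (α β h h' εx εy : Ω → ℕ) (pα pβ p px py : ℝ)
    (hα : IsBernoulli μ α pα) (hβ : IsBernoulli μ β pβ)
    (hh : IsBernoulli μ h p) (hh' : IsBernoulli μ h' p)
    (hεx : IsBernoulli μ εx px) (hεy : IsBernoulli μ εy py)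
    (hind : iIndepFun ![α, β, h, h', εx, εy] μ) :
    IsBernoulli μ
      (fun ω => max (α ω * h ω) (εx ω) * max (β ω * h' ω) (εy ω))
      (p ^ 2 * pα * pβ + px * py + p * pα * (1 - pβ) * (1 - px) * py
        + p * (1 - pα) * pβ * px * (1 - py) - p ^ 2 * pα * pβ * px * py
        + p * (1 - p) * pα * pβ * (py * (1 - px) + px * (1 - py))) := by
  have hmeas : ∀ i, Measurable (![α, β, h, h', εx, εy] i) := by
    intro i; fin_cases i
    exacts [hα.1, hβ.1, hh.1, hh'.1, hεx.1, hεy.1]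
  have hX := (hα.mul hh (hind.indepFun (i := 0) (j := 2) (by decide))).max hεx
    (hind.indepFun_mul_left hmeas 0 2 4 (by decide) (by decide))
  have hY := (hβ.mul hh' (hind.indepFun (i := 1) (j := 3) (by decide))).max hεy
    (hind.indepFun_mul_left hmeas 1 3 5 (by decide) (by decide))
  have hXY := hind.indepFun_comp_triple hmeas (i₁ := 0) (i₂ := 2) (i₃ := 4) (j₁ := 1) (j₂ := 3)
    (j₃ := 5) (by decide) (φ := fun x => max (x.1 * x.2.1) x.2.2)
    (ψ := fun x => max (x.1 * x.2.1) x.2.2) .of_discrete .of_discrete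
  convert hX.mul hY hXY using 1
  ring
end

section
/- Under the assumptions p ∈ (0,1), p_α, p_β ∈ (0,1], p_x, p_y ∈ [0,1), let z⁺ and z⁻ be means of w i.i.d. copies of c⁺ and c⁻ respectively (as defined in the concurrence model). Then E[z⁺] − E[z⁻] = p·(1−p)·p_α·p_β·(1−p_x)·(1−p_y) > 0, for every positive integer w. -/
/-!
For `{0,1}`-valued variables `max u v = u + v - u v`, so
`c⁺ - c⁻ = max(αh, εx) β (h - h') (1 - εy)`, and `h² = h` rewrites this as
`α β h (1 - h') (1 - εx) (1 - εy) + εx β (1 - εy) (h - h')`.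
Every monomial here is a product of functions of distinct independent Bernoulli variables, so
its mean is the product of the means; the second term has mean zero since `h` and `h'` have the
same law, and the first one gives the gap `p (1 - p) pα pβ (1 - px) (1 - py)` for every copy,
hence also for the averages over `w` copies.
-/

open MeasureTheory ProbabilityTheory

namespace IsBernoulli

variable {Ω : Type*} [MeasurableSpace Ω] {μ : Measure Ω} {X : Ω → ℕ} {r : ℝ}

lemma le_one (hX : IsBernoulli μ X r) (ω : Ω) : X ω ≤ 1 := by
  rcases hX.2.1 ω with h | h <;> simp [h]

lemma integral_natCast (hX : IsBernoulli μ X r) : ∫ ω, (X ω : ℝ) ∂μ = r := by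
  have hind : (fun ω => (X ω : ℝ)) = {ω | X ω = 1}.indicator 1 := by
    funext ω
    rcases hX.2.1 ω with h | h <;> simp [h]
  have hs : MeasurableSet {ω | X ω = 1} := hX.1 (measurableSet_singleton 1)
  rw [hind, integral_indicator_one hs, measureReal_def, hX.2.2]

lemma one_sub [IsProbabilityMeasure μ] (hX : IsBernoulli μ X r) :
    IsBernoulli μ (fun ω => 1 - X ω) (1 - r) := by
  have hset : {ω | 1 - X ω = 1} = {ω | X ω = 1}ᶜ := by
    ext ω
    rcases hX.2.1 ω with h | h <;> simp [h]
  refine ⟨hX.1.const_sub 1, fun ω => ?_, ?_⟩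
  · rcases hX.2.1 ω with h | h <;> simp [h]
  · have hs : MeasurableSet {ω | X ω = 1} := hX.1 (measurableSet_singleton 1)
    rw [hset, ← measureReal_def, probReal_compl_eq_one_sub hs, measureReal_def, hX.2.2]

end IsBernoulli

lemma isBernoulli_one {Ω : Type*} [MeasurableSpace Ω] (μ : Measure Ω)
    [IsProbabilityMeasure μ] : IsBernoulli μ (fun _ => 1) 1 :=
  ⟨measurable_const, fun _ => Or.inr rfl, by simp⟩

section

variable {Ω : Type*} [MeasurableSpace Ω] {μ : Measure Ω}

lemma integrable_natCast_of_le_one [IsFiniteMeasure μ] {f : Ω → ℕ} (hf : Measurable f)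
    (h : ∀ ω, f ω ≤ 1) : Integrable (fun ω => (f ω : ℝ)) μ :=
  .of_bound (by fun_prop) 1 (ae_of_all _ fun ω => by simpa using h ω)

lemma ProbabilityTheory.iIndepFun.integral_natCast_prod_comp {ι : Type*} [Fintype ι]
    {X : ι → Ω → ℕ} (hind : iIndepFun X μ) {g : ι → ℕ → ℕ} {r : ι → ℝ}
    (hX : ∀ i, IsBernoulli μ (g i ∘ X i) (r i)) :
    ∫ ω, ((∏ i, g i (X i ω) : ℕ) : ℝ) ∂μ = ∏ i, r i := by
  push_cast
  rw [← Finset.prod_congr rfl fun i _ => (hX i).integral_natCast]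
  exact (hind.comp g fun _ => measurable_from_top).integral_fun_prod_comp
    (f := fun _ (n : ℕ) => (n : ℝ)) (fun i => (hX i).1.aemeasurable)
    (fun _ => measurable_from_top.aestronglyMeasurable)

-- `c⁺ - c⁻ = a b c (1 - d) (1 - x) (1 - y) + b c x (1 - y) - b d x (1 - y)`, with the negative
-- term moved to the left so that no truncated subtraction occurs.
lemma max_mul_max_add_eq_of_le_one {a b c d x y : ℕ} (ha : a ≤ 1) (hb : b ≤ 1) (hc : c ≤ 1)
    (hd : d ≤ 1) (hx : x ≤ 1) (hy : y ≤ 1) :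
    max (a * c) x * max (b * c) y + b * d * x * (1 - y)
      = max (a * c) x * max (b * d) y + a * b * c * (1 - d) * (1 - x) * (1 - y)
        + b * c * x * (1 - y) := by
  interval_cases a <;> interval_cases b <;> interval_cases c <;> interval_cases d <;>
    interval_cases x <;> interval_cases y <;> rfl

variable {a b c d x y : Ω → ℕ} {pa pb pc pd p px py : ℝ}

lemma integrable_natCast_max_mul_max [IsFiniteMeasure μ] (ha : IsBernoulli μ a pa)
    (hb : IsBernoulli μ b pb) (hc : IsBernoulli μ c pc) (hd : IsBernoulli μ d pd)
    (hx : IsBernoulli μ x px) (hy : IsBernoulli μ y py) :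
    Integrable (fun ω => ((max (a ω * c ω) (x ω) * max (b ω * d ω) (y ω) : ℕ) : ℝ)) μ :=
  integrable_natCast_of_le_one (((ha.1.mul hc.1).max hx.1).mul ((hb.1.mul hd.1).max hy.1))
    fun ω => by
      bound [ha.le_one ω, hb.le_one ω, hc.le_one ω, hd.le_one ω, hx.le_one ω, hy.le_one ω]

lemma integral_max_mul_max_add_eq [IsFiniteMeasure μ] (ha : IsBernoulli μ a pa)
    (hb : IsBernoulli μ b pb) (hc : IsBernoulli μ c pc) (hd : IsBernoulli μ d pd)
    (hx : IsBernoulli μ x px) (hy : IsBernoulli μ y py) :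
    ∫ ω, ((max (a ω * c ω) (x ω) * max (b ω * c ω) (y ω) : ℕ) : ℝ) ∂μ
        + ∫ ω, ((b ω * d ω * x ω * (1 - y ω) : ℕ) : ℝ) ∂μ
      = ∫ ω, ((max (a ω * c ω) (x ω) * max (b ω * d ω) (y ω) : ℕ) : ℝ) ∂μ
        + ∫ ω, ((a ω * b ω * c ω * (1 - d ω) * (1 - x ω) * (1 - y ω) : ℕ) : ℝ) ∂μ
        + ∫ ω, ((b ω * c ω * x ω * (1 - y ω) : ℕ) : ℝ) ∂μ := by
  obtain ⟨ma, mb, mc, md, mx, my⟩ : Measurable a ∧ Measurable b ∧ Measurable c ∧ Measurable d ∧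
    Measurable x ∧ Measurable y := ⟨ha.1, hb.1, hc.1, hd.1, hx.1, hy.1⟩
  have hint₁ : Integrable (fun ω =>
      ((a ω * b ω * c ω * (1 - d ω) * (1 - x ω) * (1 - y ω) : ℕ) : ℝ)) μ :=
    integrable_natCast_of_le_one (by fun_prop) fun ω => by
      bound [ha.le_one ω, hb.le_one ω, hc.le_one ω]
  have hint₂ : Integrable (fun ω => ((b ω * c ω * x ω * (1 - y ω) : ℕ) : ℝ)) μ :=
    integrable_natCast_of_le_one (by fun_prop) fun ω => by
      bound [hb.le_one ω, hc.le_one ω, hx.le_one ω]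
  have hint₃ : Integrable (fun ω => ((b ω * d ω * x ω * (1 - y ω) : ℕ) : ℝ)) μ :=
    integrable_natCast_of_le_one (by fun_prop) fun ω => by
      bound [hb.le_one ω, hd.le_one ω, hx.le_one ω]
  have hint_minus := integrable_natCast_max_mul_max ha hb hc hd hx hy
  rw [← integral_add (integrable_natCast_max_mul_max ha hb hc hc hx hy) hint₃,
    ← integral_add hint_minus hint₁,
    ← integral_add (hint_minus.add hint₁ : Integrable (fun ω => _ + _) μ) hint₂]
  refine integral_congr_ae (ae_of_all μ fun ω => ?_)
  beta_reduce
  exact_mod_cast max_mul_max_add_eq_of_le_one (ha.le_one ω) (hb.le_one ω) (hc.le_one ω)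
    (hd.le_one ω) (hx.le_one ω) (hy.le_one ω)

theorem integral_max_mul_max_sub [IsProbabilityMeasure μ] (ha : IsBernoulli μ a pa)
    (hb : IsBernoulli μ b pb) (hc : IsBernoulli μ c p) (hd : IsBernoulli μ d p)
    (hx : IsBernoulli μ x px) (hy : IsBernoulli μ y py)
    (hind : iIndepFun ![a, b, c, d, x, y] μ) :
    ∫ ω, ((max (a ω * c ω) (x ω) * max (b ω * c ω) (y ω) : ℕ) : ℝ) ∂μ
      - ∫ ω, ((max (a ω * c ω) (x ω) * max (b ω * d ω) (y ω) : ℕ) : ℝ) ∂μ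
      = p * (1 - p) * pa * pb * (1 - px) * (1 - py) := by
  have h₁ : ∫ ω, ((a ω * b ω * c ω * (1 - d ω) * (1 - x ω) * (1 - y ω) : ℕ) : ℝ) ∂μ
      = pa * pb * p * (1 - p) * (1 - px) * (1 - py) := by
    simpa [Fin.prod_univ_six] using hind.integral_natCast_prod_comp
      (g := ![id, id, id, (1 - ·), (1 - ·), (1 - ·)])
      (r := ![pa, pb, p, 1 - p, 1 - px, 1 - py])
      (by intro i; fin_cases i; exacts [ha, hb, hc, hd.one_sub, hx.one_sub, hy.one_sub])
  have h₂ : ∫ ω, ((b ω * c ω * x ω * (1 - y ω) : ℕ) : ℝ) ∂μ = pb * p * px * (1 - py) := by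
    simpa [Fin.prod_univ_six] using hind.integral_natCast_prod_comp
      (g := ![1, id, id, 1, id, (1 - ·)]) (r := ![1, pb, p, 1, px, 1 - py])
      (by intro i; fin_cases i
          exacts [isBernoulli_one μ, hb, hc, isBernoulli_one μ, hx, hy.one_sub])
  have h₃ : ∫ ω, ((b ω * d ω * x ω * (1 - y ω) : ℕ) : ℝ) ∂μ = pb * p * px * (1 - py) := by
    simpa [Fin.prod_univ_six] using hind.integral_natCast_prod_comp
      (g := ![1, id, 1, id, id, (1 - ·)]) (r := ![1, pb, 1, p, px, 1 - py])
      (by intro i; fin_cases i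
          exacts [isBernoulli_one μ, hb, isBernoulli_one μ, hd, hx, hy.one_sub])
  linarith [integral_max_mul_max_add_eq ha hb hc hd hx hy]

end

theorem mean_gap_of_means_general {Ω : Type*} [MeasurableSpace Ω]
    (μ : Measure Ω) [IsProbabilityMeasure μ] (w : ℕ) (hw : 0 < w)
    (α β h h' εx εy : ℕ → Ω → ℕ) (pα pβ p px py : ℝ)
    (hp : 0 < p) (hp1 : p < 1)
    (hpα : 0 < pα) (hpβ : 0 < pβ)
    (hpx1 : px < 1) (hpy1 : py < 1)
    (hα : ∀ t, IsBernoulli μ (α t) pα) (hβ : ∀ t, IsBernoulli μ (β t) pβ)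
    (hh : ∀ t, IsBernoulli μ (h t) p) (hh' : ∀ t, IsBernoulli μ (h' t) p)
    (hεx : ∀ t, IsBernoulli μ (εx t) px) (hεy : ∀ t, IsBernoulli μ (εy t) py)
    (hind : iIndepFun
      (fun i : ℕ × Fin 6 => ![α i.1, β i.1, h i.1, h' i.1, εx i.1, εy i.1] i.2)
      μ) :
    (μ[fun ω => (∑ t ∈ Finset.range w,
          ((max (α t ω * h t ω) (εx t ω) * max (β t ω * h t ω) (εy t ω) : ℕ)
            : ℝ)) / w]
      - μ[fun ω => (∑ t ∈ Finset.range w,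
          ((max (α t ω * h t ω) (εx t ω) * max (β t ω * h' t ω) (εy t ω) : ℕ)
            : ℝ)) / w]
      = p * (1 - p) * pα * pβ * (1 - px) * (1 - py)) ∧
    0 < p * (1 - p) * pα * pβ * (1 - px) * (1 - py) := by
  have hgap t := integral_max_mul_max_sub (hα t) (hβ t) (hh t) (hh' t) (hεx t) (hεy t)
    (hind.precomp (g := Prod.mk t) (Prod.mk_right_injective t))
  refine ⟨?_, by apply_rules [mul_pos, sub_pos.2]⟩
  have hint_plus t :=
    integrable_natCast_max_mul_max (hα t) (hβ t) (hh t) (hh t) (hεx t) (hεy t)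
  have hint_minus t :=
    integrable_natCast_max_mul_max (hα t) (hβ t) (hh t) (hh' t) (hεx t) (hεy t)
  rw [integral_div, integral_div, ← sub_div, integral_finsetSum _ fun t _ => hint_plus t,
    integral_finsetSum _ fun t _ => hint_minus t, ← Finset.sum_sub_distrib,
    Finset.sum_congr rfl fun t _ => hgap t, Finset.sum_const,
    Finset.card_range, nsmul_eq_mul, mul_div_cancel_left₀ _ (by positivity)]

/-- In the concurrence model with `p ∈ (0,1)`, `p_α, p_β ∈ (0,1]`,
`p_x, p_y ∈ [0,1)`: for every positive `w`, if `z⁺` (resp. `z⁻`) is the mean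
of `w` independent copies of `c⁺ = max(α·h, ε_x)·max(β·h, ε_y)` (resp. of
`c⁻ = max(α·h, ε_x)·max(β·h', ε_y)`), then
`E[z⁺] − E[z⁻] = p(1−p)p_α p_β (1−p_x)(1−p_y) > 0`. -/
theorem mean_gap_of_means {Ω : Type*} [MeasurableSpace Ω]
    (μ : Measure Ω) [IsProbabilityMeasure μ] (w : ℕ) (hw : 0 < w)
    (α β h h' εx εy : ℕ → Ω → ℕ) (pα pβ p px py : ℝ)
    (hp : 0 < p) (hp1 : p < 1)
    (hpα : 0 < pα) (hpα1 : pα ≤ 1) (hpβ : 0 < pβ) (hpβ1 : pβ ≤ 1)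
    (hpx : 0 ≤ px) (hpx1 : px < 1) (hpy : 0 ≤ py) (hpy1 : py < 1)
    (hα : ∀ t, IsBernoulli μ (α t) pα) (hβ : ∀ t, IsBernoulli μ (β t) pβ)
    (hh : ∀ t, IsBernoulli μ (h t) p) (hh' : ∀ t, IsBernoulli μ (h' t) p)
    (hεx : ∀ t, IsBernoulli μ (εx t) px) (hεy : ∀ t, IsBernoulli μ (εy t) py)
    (hind : iIndepFun
      (fun i : ℕ × Fin 6 => ![α i.1, β i.1, h i.1, h' i.1, εx i.1, εy i.1] i.2)
      μ) :
    (μ[fun ω => (∑ t ∈ Finset.range w,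
          ((max (α t ω * h t ω) (εx t ω) * max (β t ω * h t ω) (εy t ω) : ℕ)
            : ℝ)) / w]
      - μ[fun ω => (∑ t ∈ Finset.range w,
          ((max (α t ω * h t ω) (εx t ω) * max (β t ω * h' t ω) (εy t ω) : ℕ)
            : ℝ)) / w]
      = p * (1 - p) * pα * pβ * (1 - px) * (1 - py)) ∧
    0 < p * (1 - p) * pα * pβ * (1 - px) * (1 - py) :=
  mean_gap_of_means_general μ w hw α β h h' εx εy pα pβ p px py hp hp1 hpα hpβ hpx1 hpy1 hα hβ hh
    hh' hεx hεy hind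
end
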